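/- Let Ω ⊂ ℝ^N be an unbounded domain and V ∈ L²_loc(Ω) with inf_Ω V > 0. Then ∫_{S(x)∩Ω} 1/V(ξ) dξ → 0 as |x| → ∞ if and only if for every b > 0, |S(x) ∩ Ω_b| → 0 as |x| → ∞, where Ω_b = {x ∈ Ω : V(x) ≤ b}. In particular, if V is identically constant the condition reduces to |S(x) ∩ Ω| → 0 as |x| → ∞. -/

import Mathlib

open MeasureTheory Filter Topology Metric Set

noncomputable section

abbrev Euc (N : ℕ) := EuclideanSpace ℝ (Fin N)

/-- the filter `|x| → ∞` on `ℝ^N`. -/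
def atInfty (N : ℕ) : Filter (Euc N) := Bornology.cobounded (Euc N)

/-!
On a set `s` where `V ≥ v₀ > 0`, Markov's inequality for `1 / V` gives
`|s ∩ {V ≤ b}| ≤ b ∫_s 1 / V`, while splitting `s` along `{V ≤ b}` gives
`∫_s 1 / V ≤ |s ∩ {V ≤ b}| / v₀ + |s| / b`. Applied to `s = S(x) ∩ Ω`, whose measure is at most
`|S(0)|`, the first inequality yields one implication and the second, with `b` large, the other.
-/

open scoped ENNReal

theorem tendsto_zero_of_forall_le_mul_add_div {ι : Type*} {l : Filter ι} {f : ι → ℝ}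
    {g : ℝ → ι → ℝ} {K c : ℝ} (hf : ∀ i, 0 ≤ f i) (hfg : ∀ b > 0, ∀ i, f i ≤ K * g b i + c / b)
    (hg : ∀ b > 0, Tendsto (g b) l (𝓝 0)) : Tendsto f l (𝓝 0) := by
  refine tendsto_order.2 ⟨fun a ha => .of_forall fun i => ha.trans_le (hf i), fun ε hε => ?_⟩
  obtain ⟨b, hcb, hb⟩ : ∃ b, c / b < ε ∧ 0 < b :=
    (((tendsto_const_nhds.div_atTop tendsto_id).eventually (gt_mem_nhds hε)).and
      (eventually_gt_atTop 0)).exists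
  have hlim : Tendsto (fun i => K * g b i + c / b) l (𝓝 (c / b)) := by
    simpa using ((hg b hb).const_mul K).add_const (c / b)
  filter_upwards [hlim.eventually (gt_mem_nhds hcb)] with i hi
  exact (hfg b hb i).trans_lt hi

section InverseIntegral

variable {α : Type*} [MeasurableSpace α] {μ : Measure α} {s : Set α} {V : α → ℝ} {v₀ b : ℝ}

theorem integrableOn_one_div_of_le (hs : MeasurableSet s) (hμs : μ s ≠ ∞)
    (hVm : AEMeasurable V (μ.restrict s)) (hv₀ : 0 < v₀) (hV : ∀ x ∈ s, v₀ ≤ V x) :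
    IntegrableOn (fun x => 1 / V x) s μ := by
  refine (integrableOn_const (C := 1 / v₀) hμs).mono' (hVm.const_div 1).aestronglyMeasurable ?_
  refine ae_restrict_of_forall_mem hs fun x hx => ?_
  rw [Real.norm_of_nonneg (one_div_pos.2 (hv₀.trans_le (hV x hx))).le]
  exact one_div_le_one_div_of_le hv₀ (hV x hx)

theorem measureReal_inter_setOf_le_le_mul_setIntegral (hs : MeasurableSet s)
    (hint : IntegrableOn (fun x => 1 / V x) s μ) (hV : ∀ x ∈ s, 0 < V x) (hb : 0 < b) :
    μ.real (s ∩ {x | V x ≤ b}) ≤ b * ∫ x in s, 1 / V x ∂μ := by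
  have hmarkov := mul_meas_ge_le_integral_of_nonneg
    (ae_restrict_of_forall_mem hs fun x hx => (one_div_pos.2 (hV x hx)).le) hint (1 / b)
  have hset : {x | 1 / b ≤ 1 / V x} ∩ s = s ∩ {x | V x ≤ b} := by
    ext x
    simp only [mem_inter_iff, mem_ofPred_eq]
    constructor
    · rintro ⟨h, hx⟩; exact ⟨hx, (one_div_le_one_div hb (hV x hx)).1 h⟩
    · rintro ⟨hx, h⟩; exact ⟨(one_div_le_one_div hb (hV x hx)).2 h, hx⟩
  rw [measureReal_restrict_apply' hs, hset] at hmarkov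
  rwa [one_div_mul_eq_div, div_le_iff₀' hb] at hmarkov

theorem setIntegral_one_div_le (hs : MeasurableSet s) (hμs : μ s ≠ ∞)
    (hVm : AEMeasurable V (μ.restrict s)) (hv₀ : 0 < v₀) (hV : ∀ x ∈ s, v₀ ≤ V x) (hb : 0 < b) :
    ∫ x in s, 1 / V x ∂μ ≤ 1 / v₀ * μ.real (s ∩ {x | V x ≤ b}) + μ.real s / b := by
  set t := {x | V x ≤ b}
  have ht : NullMeasurableSet t (μ.restrict s) := hVm.nullMeasurable measurableSet_Iic
  have hbound : ∀ x ∈ s, 1 / V x ≤ t.indicator (fun _ => 1 / v₀) x + 1 / b := by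
    intro x hx
    by_cases hxt : x ∈ t
    · rw [indicator_of_mem hxt]
      linarith [one_div_le_one_div_of_le hv₀ (hV x hx), one_div_pos.2 hb]
    · rw [indicator_of_notMem hxt, zero_add]
      exact one_div_le_one_div_of_le hb (not_le.1 hxt).le
  have hind : IntegrableOn (t.indicator fun _ => 1 / v₀) s μ :=
    (integrableOn_const hμs).indicator₀ ht
  calc ∫ x in s, 1 / V x ∂μ
      ≤ ∫ x in s, (t.indicator (fun _ => 1 / v₀) x + 1 / b) ∂μ :=
        setIntegral_mono_on (integrableOn_one_div_of_le hs hμs hVm hv₀ hV)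
          (hind.add (integrableOn_const hμs)) hs hbound
    _ = 1 / v₀ * μ.real (s ∩ t) + μ.real s / b := by
        rw [integral_add hind (integrableOn_const hμs), integral_indicator₀ ht, setIntegral_const,
          setIntegral_const, measureReal_restrict_apply' hs, inter_comm, smul_eq_mul, smul_eq_mul]
        ring

theorem tendsto_setIntegral_one_div_iff_forall_tendsto_measureReal_sublevel {ι : Type*}
    {l : Filter ι} {s : ι → Set α} (hs : ∀ i, MeasurableSet (s i)) {C : ℝ≥0∞} (hC : C ≠ ∞)
    (hsC : ∀ i, μ (s i) ≤ C) (hVm : ∀ i, AEMeasurable V (μ.restrict (s i))) (hv₀ : 0 < v₀)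
    (hV : ∀ i, ∀ x ∈ s i, v₀ ≤ V x) :
    Tendsto (fun i => ∫ x in s i, 1 / V x ∂μ) l (𝓝 0) ↔
      ∀ b > 0, Tendsto (fun i => μ.real (s i ∩ {x | V x ≤ b})) l (𝓝 0) := by
  have hμs i : μ (s i) ≠ ∞ := ((hsC i).trans_lt hC.lt_top).ne
  have hint i := integrableOn_one_div_of_le (hs i) (hμs i) (hVm i) hv₀ (hV i)
  have hVpos i x (hx : x ∈ s i) : 0 < V x := hv₀.trans_le (hV i x hx)
  constructor
  · intro hI b hb
    refine squeeze_zero (fun _ => measureReal_nonneg)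
      (fun i => measureReal_inter_setOf_le_le_mul_setIntegral (hs i) (hint i) (hVpos i) hb) ?_
    simpa using hI.const_mul b
  · intro hM
    refine tendsto_zero_of_forall_le_mul_add_div (K := 1 / v₀) (c := C.toReal)
      (fun i => setIntegral_nonneg (hs i) fun x hx => (one_div_pos.2 (hVpos i x hx)).le)
      (fun b hb i => ?_) hM
    calc ∫ x in s i, 1 / V x ∂μ ≤ 1 / v₀ * μ.real (s i ∩ {x | V x ≤ b}) + μ.real (s i) / b :=
          setIntegral_one_div_le (hs i) (hμs i) (hVm i) hv₀ (hV i) hb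
      _ ≤ 1 / v₀ * μ.real (s i ∩ {x | V x ≤ b}) + C.toReal / b := by
          gcongr
          exact ENNReal.toReal_mono hC (hsC i)

end InverseIntegral

theorem locallyIntegrableOn_of_forall_integrableOn_inter_ball {X E : Type*} [PseudoMetricSpace X]
    [MeasurableSpace X] [NormedAddCommGroup E] {μ : Measure X} {f : X → E} {s : Set X} {r : ℝ}
    (hr : 0 < r) (hf : ∀ x, IntegrableOn f (s ∩ ball x r) μ) : LocallyIntegrableOn f s μ :=
  fun x _ => ⟨s ∩ ball x r, inter_mem_nhdsWithin s (ball_mem_nhds x hr), hf x⟩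

theorem aemeasurable_of_aestronglyMeasurable_sq {α : Type*} [MeasurableSpace α] {μ : Measure α}
    {f : α → ℝ} (hf : AEStronglyMeasurable (fun x => f x ^ 2) μ) (hf₀ : ∀ᵐ x ∂μ, 0 ≤ f x) :
    AEMeasurable f μ :=
  (Real.continuous_sqrt.comp_aestronglyMeasurable hf).aemeasurable.congr <| by
    filter_upwards [hf₀] with x hx using Real.sqrt_sq hx

theorem condV_iff_shrinking_sublevels_general
    {N : ℕ} (Ω : Set (Euc N)) (hΩopen : IsOpen Ω)
    (V : Euc N → ℝ)
    (hloc : ∀ x : Euc N, IntegrableOn (fun ξ => (V ξ) ^ 2) (Ω ∩ ball x 1) volume)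
    (hpos : ∃ v₀ > 0, ∀ x ∈ Ω, v₀ ≤ V x) :
    ((Tendsto (fun x : Euc N => ∫ ξ in ball x 1 ∩ Ω, 1 / V ξ) (atInfty N) (𝓝 0)) ↔
      (∀ b > (0:ℝ), Tendsto
        (fun x : Euc N => (volume (ball x 1 ∩ {y ∈ Ω | V y ≤ b})).toReal)
        (atInfty N) (𝓝 0))) ∧
    (∀ cst : ℝ, 0 < cst → (∀ x ∈ Ω, V x = cst) →
      ((Tendsto (fun x : Euc N => ∫ ξ in ball x 1 ∩ Ω, 1 / V ξ) (atInfty N) (𝓝 0)) ↔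
        Tendsto (fun x : Euc N => (volume (ball x 1 ∩ Ω)).toReal) (atInfty N) (𝓝 0))) := by
  obtain ⟨v₀, hv₀, hV⟩ := hpos
  have hΩ : MeasurableSet Ω := hΩopen.measurableSet
  have hs x : MeasurableSet (ball x 1 ∩ Ω) := measurableSet_ball.inter hΩ
  have hVm : AEMeasurable V (volume.restrict Ω) :=
    aemeasurable_of_aestronglyMeasurable_sq
      (locallyIntegrableOn_of_forall_integrableOn_inter_ball one_pos hloc).aestronglyMeasurable
      (ae_restrict_of_forall_mem hΩ fun x hx => hv₀.le.trans (hV x hx))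
  have hsublevel b x : ball x 1 ∩ {y ∈ Ω | V y ≤ b} = ball x 1 ∩ Ω ∩ {y | V y ≤ b} := by
    ext; simp [and_assoc]
  refine ⟨?_, fun cst hcst hVcst => ?_⟩
  · simp only [hsublevel, ← measureReal_def]
    exact tendsto_setIntegral_one_div_iff_forall_tendsto_measureReal_sublevel hs
      measure_ball_lt_top.ne (fun x => (measure_mono inter_subset_left).trans
        (Measure.addHaar_ball_center volume x 1).le)
      (fun x => hVm.mono_measure (Measure.restrict_mono inter_subset_right le_rfl)) hv₀
      (fun x y hy => hV y hy.2)
  · have hI x : ∫ ξ in ball x 1 ∩ Ω, 1 / V ξ = (volume (ball x 1 ∩ Ω)).toReal / cst := by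
      rw [setIntegral_congr_fun (hs x) fun ξ hξ => by rw [hVcst ξ hξ.2], setIntegral_const,
        smul_eq_mul, measureReal_def, mul_one_div]
    simp only [hI]
    exact ⟨fun h => by simpa [hcst.ne'] using h.mul_const cst,
      fun h => by simpa using h.div_const cst⟩

/-- **Characterization of condition (V).** For an unbounded domain `Ω ⊂ ℝ^N` and
`V ∈ L²_loc(Ω)` with `inf_Ω V > 0`, the condition `∫_{S(x)∩Ω} 1/V → 0` as `|x| → ∞` holds
iff for every `b > 0`, `|S(x) ∩ Ω_b| → 0` as `|x| → ∞`, where `Ω_b = {x ∈ Ω : V x ≤ b}`.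
In particular, for `V` identically constant on `Ω` it reduces to `|S(x) ∩ Ω| → 0`. -/
theorem condV_iff_shrinking_sublevels
    {N : ℕ} (Ω : Set (Euc N)) (hΩopen : IsOpen Ω) (hΩunb : ¬ Bornology.IsBounded Ω)
    (V : Euc N → ℝ)
    (hloc : ∀ x : Euc N, IntegrableOn (fun ξ => (V ξ) ^ 2) (Ω ∩ ball x 1) volume)
    (hpos : ∃ v₀ > 0, ∀ x ∈ Ω, v₀ ≤ V x) :
    ((Tendsto (fun x : Euc N => ∫ ξ in ball x 1 ∩ Ω, 1 / V ξ) (atInfty N) (𝓝 0)) ↔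
      (∀ b > (0:ℝ), Tendsto
        (fun x : Euc N => (volume (ball x 1 ∩ {y ∈ Ω | V y ≤ b})).toReal)
        (atInfty N) (𝓝 0))) ∧
    (∀ cst : ℝ, 0 < cst → (∀ x ∈ Ω, V x = cst) →
      ((Tendsto (fun x : Euc N => ∫ ξ in ball x 1 ∩ Ω, 1 / V ξ) (atInfty N) (𝓝 0)) ↔
        Tendsto (fun x : Euc N => (volume (ball x 1 ∩ Ω)).toReal) (atInfty N) (𝓝 0))) :=
  condV_iff_shrinking_sublevels_general Ω hΩopen V hloc hpos
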